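/- arXiv:2011.06816 — 3 statements merged into one kernel-verified Lean document; each statement's English description precedes it below -/
import Mathlib

section
/- (Upper Cheeger inequality) Let Γ be a connected k-uniform hypergraph satisfying deg(v) ≤ Σ_{w≠v} deg(w) for all vertices v. Then k − λ_{n−1} ≤ 2(k−1)h, where λ_{n−1} is the second largest eigenvalue of the normalized Laplacian and h is the hypergraph Cheeger constant. -/
open Finset

/-- The degree of a vertex: number of edges (with multiplicity) containing it. -/
def hdeg {V : Type*} [DecidableEq V] (E : Multiset (Finset V)) (v : V) : ℕ :=
  Multiset.countP (fun e => v ∈ e) E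

/-- The volume of a set of vertices: sum of the degrees. -/
def hvol {V : Type*} [DecidableEq V] (E : Multiset (Finset V)) (S : Finset V) : ℕ :=
  ∑ v ∈ S, hdeg E v

/-- `E_r(S)`: the edges `e` (with multiplicity) with `|e ∩ S| = r`. -/
def Er {V : Type*} [DecidableEq V] (E : Multiset (Finset V)) (S : Finset V) (r : ℕ) :
    Multiset (Finset V) :=
  Multiset.filter (fun e => (e ∩ S).card = r) E

/-- `|E(v,w)|`: the number of edges (with multiplicity) containing both `v` and `w`. -/
def Evw {V : Type*} [DecidableEq V] (E : Multiset (Finset V)) (v w : V) : ℕ :=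
  Multiset.countP (fun e => v ∈ e ∧ w ∈ e) E

/-- The adjacency matrix: `A v w = -|E(v,w)|` for `v ≠ w` and `A v v = 0`. -/
noncomputable def adjM {V : Type*} [Fintype V] [DecidableEq V] (E : Multiset (Finset V)) : Matrix V V ℝ :=
  Matrix.of fun v w => if v = w then 0 else -(Evw E v w : ℝ)

/-- The normalized Laplacian `L = I - D⁻¹ A`. -/
noncomputable def lapM {V : Type*} [Fintype V] [DecidableEq V] (E : Multiset (Finset V)) : Matrix V V ℝ :=
  Matrix.of fun v w => (if v = w then (1 : ℝ) else 0) - adjM E v w / (hdeg E v : ℝ)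

/-- Connectedness: every pair of vertices is joined by a path of edges. -/
def HConnected {V : Type*} (E : Multiset (Finset V)) : Prop :=
  ∀ v w : V, Relation.ReflTransGen (fun a b => ∃ e ∈ E, a ∈ e ∧ b ∈ e) v w
/-- The Rayleigh quotient of a vertex function. -/
noncomputable def RQ {V : Type*} [Fintype V] [DecidableEq V] (E : Multiset (Finset V))
    (f : V → ℝ) : ℝ :=
  (E.map (fun e => (∑ v ∈ e, f v) ^ 2)).sum / ∑ v, (hdeg E v : ℝ) * f v ^ 2

/-- The second largest eigenvalue of the normalized Laplacian, via its variational
characterization `λ_{n-1} = max {RQ f : f ≠ 0, f ⊥ 1}`. -/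
noncomputable def lamSecond {V : Type*} [Fintype V] [DecidableEq V]
    (E : Multiset (Finset V)) : ℝ :=
  sSup {x : ℝ | ∃ f : V → ℝ, f ≠ 0 ∧ (∑ v, (hdeg E v : ℝ) * f v = 0) ∧ RQ E f = x}
/-- The generalized Cheeger constant `h` of a `k`-uniform hypergraph. -/
noncomputable def cheeger {V : Type*} [Fintype V] [DecidableEq V]
    (E : Multiset (Finset V)) (k : ℕ) : ℝ :=
  sInf {x : ℝ | ∃ S : Finset V, S.Nonempty ∧ S ≠ Finset.univ ∧
    x = ((∑ r ∈ Finset.Icc 1 (k - 1), Multiset.card (Er E S r) * r * (k - r) : ℕ) : ℝ) /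
      (min (hvol E S) (hvol E Sᶜ) : ℕ)}

/-! Let `S` attain the Cheeger constant, `s = vol S`, `t = vol Sᶜ`, and test the variational
characterization of `λ_{n-1}` with `f = t` on `S` and `f = -s` off `S`: it is orthogonal to the
degree vector and `∑ deg f² = s t (s + t)`. On an edge meeting `S` in `r` vertices,
`k ∑ f² - (∑ f)² = r (k - r) (s + t)²`, so `k - RQ f = (1/s + 1/t) N` with `N` the numerator of
`h(S)`. Then `1/s + 1/t ≤ 2 / min s t`, and `N ≠ 0` forces `k ≥ 2`, i.e. `N ≤ (k - 1) N`. -/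

lemma card_mul_sum_sq_sub_sq_sum_ite {V : Type*} [DecidableEq V] (e S : Finset V) (a b : ℝ) :
    (e.card : ℝ) * ∑ v ∈ e, (if v ∈ S then a else b) ^ 2 - (∑ v ∈ e, if v ∈ S then a else b) ^ 2
      = (e ∩ S).card * (e \ S).card * (a - b) ^ 2 := by
  have hcard : ((e \ S).card : ℝ) + (e ∩ S).card = e.card := by
    exact_mod_cast Finset.card_sdiff_add_card_inter e S
  simp only [apply_ite (· ^ 2), Finset.sum_ite, Finset.filter_mem_eq_inter,
    Finset.filter_notMem_eq_sdiff, Finset.sum_const, nsmul_eq_mul, ← hcard]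
  ring

section Hypergraph

variable {V : Type*} [DecidableEq V] (E : Multiset (Finset V))

def cheegerNum (k : ℕ) (S : Finset V) : ℕ :=
  ∑ r ∈ Finset.Icc 1 (k - 1), Multiset.card (Er E S r) * r * (k - r)

lemma sum_card_inter_mul_card_sdiff {k : ℕ} (hk : ∀ e ∈ E, e.card = k) (S : Finset V) :
    (E.map fun e => (e ∩ S).card * (e \ S).card).sum = cheegerNum E k S := by
  rw [cheegerNum]
  induction E using Multiset.induction with
  | empty => simp [Er]
  | cons e E ih =>
    have hsdiff : (e \ S).card = k - (e ∩ S).card := by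
      rw [← hk e (Multiset.mem_cons_self e E), ← Finset.card_sdiff_add_card_inter e S]; omega
    simp only [Multiset.map_cons, Multiset.sum_cons, Er, Multiset.filter_cons, Multiset.card_add,
      ih fun e' he' => hk e' (Multiset.mem_cons_of_mem he')]
    have hle : (e ∩ S).card ≤ k :=
      hk e (Multiset.mem_cons_self e E) ▸ Finset.card_le_card Finset.inter_subset_left
    simp only [apply_ite Multiset.card, Multiset.card_singleton, Multiset.card_zero, add_mul,
      Finset.sum_add_distrib, ite_mul, one_mul, zero_mul, Finset.sum_ite_eq, hsdiff, Finset.mem_Icc]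
    congr 1
    split_ifs with h
    · rfl
    · exact Nat.mul_eq_zero.mpr (by omega)

lemma cheegerNum_le_sub_one_mul (k : ℕ) (S : Finset V) :
    (cheegerNum E k S : ℝ) ≤ ((k : ℝ) - 1) * cheegerNum E k S := by
  rcases (cheegerNum E k S).eq_zero_or_pos with h | h
  · simp [h]
  obtain ⟨r, hr, -⟩ := Finset.exists_ne_zero_of_sum_ne_zero h.ne'
  have hk : (2 : ℝ) ≤ k := by
    have := Finset.mem_Icc.mp hr
    exact_mod_cast (by omega : 2 ≤ k)
  exact le_mul_of_one_le_left (Nat.cast_nonneg _) (by linarith)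

variable [Fintype V]

lemma sum_hdeg_mul (g : V → ℝ) :
    ∑ v, (hdeg E v : ℝ) * g v = (E.map fun e => ∑ v ∈ e, g v).sum := by
  induction E using Multiset.induction with
  | empty => simp [hdeg]
  | cons e E ih =>
    simp only [hdeg, Multiset.countP_cons, Nat.cast_add, Nat.cast_ite, Nat.cast_one,
      Nat.cast_zero, add_mul, ite_mul, one_mul, zero_mul, Finset.sum_add_distrib,
      Finset.sum_ite_mem, Finset.univ_inter, Multiset.map_cons, Multiset.sum_cons] at ih ⊢
    rw [ih, add_comm]

lemma sum_hdeg_mul_ite (S : Finset V) (a b : ℝ) :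
    ∑ v, (hdeg E v : ℝ) * (if v ∈ S then a else b) = a * hvol E S + b * hvol E Sᶜ := by
  simp only [mul_ite, Finset.sum_ite, Finset.filter_mem_eq_inter, Finset.univ_inter,
    Finset.filter_notMem_eq_sdiff, ← Finset.compl_eq_univ_sdiff, ← Finset.sum_mul, hvol,
    Nat.cast_sum]
  ring

lemma RQ_le_of_uniform {k : ℕ} (hk : ∀ e ∈ E, e.card = k) (f : V → ℝ) : RQ E f ≤ k := by
  refine div_le_of_le_mul₀ (Finset.sum_nonneg fun v _ => by positivity) k.cast_nonneg ?_
  rw [sum_hdeg_mul, ← Multiset.sum_map_mul_left]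
  refine Multiset.sum_map_le_sum_map _ _ fun e he => ?_
  simpa only [hk e he] using (sq_sum_le_card_mul_sum_sq (s := e) (f := f))

lemma RQ_le_lamSecond {k : ℕ} (hk : ∀ e ∈ E, e.card = k) {f : V → ℝ} (hf : f ≠ 0)
    (horth : ∑ v, (hdeg E v : ℝ) * f v = 0) : RQ E f ≤ lamSecond E :=
  le_csSup ⟨k, by rintro _ ⟨g, -, -, rfl⟩; exact RQ_le_of_uniform E hk g⟩ ⟨f, hf, horth, rfl⟩


noncomputable def cheegerRatio (k : ℕ) (S : Finset V) : ℝ :=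
  (cheegerNum E k S : ℝ) / (min (hvol E S) (hvol E Sᶜ) : ℕ)

lemma cheeger_eq_sInf_cheegerRatio (k : ℕ) :
    cheeger E k =
      sInf {x | ∃ S : Finset V, S.Nonempty ∧ S ≠ Finset.univ ∧ x = cheegerRatio E k S} :=
  rfl

noncomputable def cutTestFn (S : Finset V) (v : V) : ℝ :=
  if v ∈ S then (hvol E Sᶜ : ℝ) else -(hvol E S : ℝ)

lemma sum_hdeg_mul_cutTestFn (S : Finset V) : ∑ v, (hdeg E v : ℝ) * cutTestFn E S v = 0 := by
  simp only [cutTestFn, sum_hdeg_mul_ite]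
  ring

lemma sub_RQ_cutTestFn {k : ℕ} (hk : ∀ e ∈ E, e.card = k) {S : Finset V} (hs : 0 < hvol E S)
    (ht : 0 < hvol E Sᶜ) :
    (k : ℝ) - RQ E (cutTestFn E S)
      = (hvol E S + hvol E Sᶜ) * cheegerNum E k S / (hvol E S * hvol E Sᶜ) := by
  set s : ℝ := (hvol E S : ℝ)
  set t : ℝ := (hvol E Sᶜ : ℝ)
  have hdenom : ∑ v, (hdeg E v : ℝ) * cutTestFn E S v ^ 2 = s * t * (s + t) := by
    simp only [cutTestFn, apply_ite (· ^ 2), sum_hdeg_mul_ite]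
    ring
  have hdefect : (k : ℝ) * (s * t * (s + t)) - (E.map fun e => (∑ v ∈ e, cutTestFn E S v) ^ 2).sum
      = (s + t) ^ 2 * cheegerNum E k S := by
    rw [← hdenom, sum_hdeg_mul, ← Multiset.sum_map_mul_left, ← Multiset.sum_map_sub,
      ← sum_card_inter_mul_card_sdiff E hk S, Nat.cast_multiset_sum, Multiset.map_map,
      ← Multiset.sum_map_mul_left]
    refine congrArg _ (Multiset.map_congr rfl fun e he => ?_)
    simp only [← hk e he, cutTestFn, card_mul_sum_sq_sub_sq_sum_ite, Function.comp_apply,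
      Nat.cast_mul]
    ring
  have hs' : (0 : ℝ) < s := Nat.cast_pos.mpr hs
  have ht' : (0 : ℝ) < t := Nat.cast_pos.mpr ht
  rw [RQ, hdenom]
  field_simp
  linear_combination hdefect

lemma cutTestFn_ne_zero {S : Finset V} (hS : S.Nonempty) (ht : 0 < hvol E Sᶜ) :
    cutTestFn E S ≠ 0 := by
  obtain ⟨v, hv⟩ := hS
  intro h
  have hv0 := congrFun h v
  simp only [cutTestFn, if_pos hv, Pi.zero_apply, Nat.cast_eq_zero] at hv0
  exact ht.ne' hv0

lemma exists_cheeger_eq_cheegerRatio [Nontrivial V] (k : ℕ) :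
    ∃ S : Finset V, S.Nonempty ∧ S ≠ Finset.univ ∧ cheeger E k = cheegerRatio E k S := by
  obtain ⟨v, w, hvw⟩ := exists_pair_ne V
  set C := {x | ∃ S : Finset V, S.Nonempty ∧ S ≠ Finset.univ ∧ x = cheegerRatio E k S}
  have hne : C.Nonempty :=
    ⟨_, {v}, Finset.singleton_nonempty v,
      fun h => hvw (Finset.mem_singleton.mp (h ▸ Finset.mem_univ w)).symm, rfl⟩
  have hfin : C.Finite :=
    (Set.finite_range (cheegerRatio E k)).subset (by rintro _ ⟨S, -, -, rfl⟩; exact ⟨S, rfl⟩)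
  obtain ⟨S, hS, hSu, hSeq⟩ := hne.csInf_mem hfin
  exact ⟨S, hS, hSu, (cheeger_eq_sInf_cheegerRatio E k).trans hSeq⟩

end Hypergraph

lemma add_div_mul_le_two_div_min {s t : ℝ} (hs : 0 < s) (ht : 0 < t) :
    (s + t) / (s * t) ≤ 2 / min s t := by
  have hm : 0 < min s t := lt_min hs ht
  calc (s + t) / (s * t) = 1 / t + 1 / s := by field_simp
    _ ≤ 1 / min s t + 1 / min s t :=
      add_le_add (one_div_le_one_div_of_le hm (min_le_right s t))
        (one_div_le_one_div_of_le hm (min_le_left s t))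
    _ = 2 / min s t := by ring

theorem stmt6_general {V : Type*} [Fintype V] [DecidableEq V] [Nonempty V]
    (E : Multiset (Finset V)) (k : ℕ)
    (hk : ∀ e ∈ E, e.card = k) (hdegpos : ∀ v, 0 < hdeg E v)
    (hass : ∀ v : V, hdeg E v ≤ ∑ w ∈ Finset.univ.erase v, hdeg E w) :
    (k : ℝ) - lamSecond E ≤ 2 * ((k : ℝ) - 1) * cheeger E k := by
  have : Nontrivial V := by
    obtain ⟨v⟩ := ‹Nonempty V›
    obtain ⟨w, hw⟩ := Finset.nonempty_of_sum_ne_zero ((hdegpos v).trans_le (hass v)).ne'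
    exact ⟨⟨w, v, Finset.ne_of_mem_erase hw⟩⟩
  obtain ⟨S, hS, hSu, hcheeger⟩ := exists_cheeger_eq_cheegerRatio E k
  have hs : 0 < hvol E S := Finset.sum_pos (fun v _ => hdegpos v) hS
  have ht : 0 < hvol E Sᶜ := Finset.sum_pos (fun v _ => hdegpos v)
    (Finset.nonempty_iff_ne_empty.mpr (by rwa [Ne, Finset.compl_eq_empty_iff]))
  have hRQ := RQ_le_lamSecond E hk (cutTestFn_ne_zero E hS ht) (sum_hdeg_mul_cutTestFn E S)
  rw [hcheeger, cheegerRatio, Nat.cast_min]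
  calc (k : ℝ) - lamSecond E ≤ k - RQ E (cutTestFn E S) := by linarith
    _ = (hvol E S + hvol E Sᶜ) / (hvol E S * hvol E Sᶜ) * cheegerNum E k S := by
      rw [sub_RQ_cutTestFn E hk hs ht]; ring
    _ ≤ 2 / min (hvol E S : ℝ) (hvol E Sᶜ) * (((k : ℝ) - 1) * cheegerNum E k S) :=
      mul_le_mul (add_div_mul_le_two_div_min (Nat.cast_pos.mpr hs) (Nat.cast_pos.mpr ht))
        (cheegerNum_le_sub_one_mul E k S) (Nat.cast_nonneg _) (by positivity)
    _ = 2 * ((k : ℝ) - 1) * (cheegerNum E k S / min (hvol E S : ℝ) (hvol E Sᶜ)) := by ring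

theorem stmt6 {V : Type*} [Fintype V] [DecidableEq V] [Nonempty V]
    (E : Multiset (Finset V)) (k : ℕ)
    (hk : ∀ e ∈ E, e.card = k) (hconn : HConnected E) (hdegpos : ∀ v, 0 < hdeg E v)
    (hass : ∀ v : V, hdeg E v ≤ ∑ w ∈ Finset.univ.erase v, hdeg E w) :
    (k : ℝ) - lamSecond E ≤ 2 * ((k : ℝ) - 1) * cheeger E k :=
  stmt6_general E k hk hdegpos hass
end

section
/- (Lower Cheeger inequality) Let Γ be a connected k-uniform hypergraph satisfying deg(v) ≤ Σ_{w≠v} deg(w) for all vertices v. Then k − λ_{n−1} ≥ h²/(2(k−1)), where λ_{n−1} is the second largest eigenvalue of the normalized Laplacian and h is the hypergraph Cheeger constant. -/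
open Finset

/-!
Let `w(u, v)` be the number of edges through two distinct vertices `u ≠ v`. For a `k`-uniform
hypergraph, `2 ∑ₑ (∑_{v ∈ e} f v)² = 2k ∑ᵥ dᵥ f(v)² - ∑_{u,v} w(u,v) (f u - f v)²`, so the
Rayleigh quotient is `k` minus half the energy `∑_{u,v} w(u,v) (f u - f v)²` divided by
`∑ᵥ dᵥ f(v)²`, and it suffices to prove `h² ∑ᵥ dᵥ f(v)² ≤ (k - 1) · energy` whenever `f ⊥ d`.

Shifting `f` by a weighted median only increases `∑ᵥ dᵥ f(v)²` (by orthogonality) and keeps the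
energy; its positive and negative parts then split the left side, lower the energy, and are each
supported on at most half of the volume. For such a `g ≥ 0`, the discrete co-area argument gives
`2h ∑ᵥ dᵥ g(v)² ≤ ∑_{u,v} w(u,v) |g(u)² - g(v)²|`, and by Cauchy–Schwarz the right side is at most
`√energy · (∑_{u,v} w(u,v) (g u + g v)²)^{1/2} ≤ √energy · (4(k-1) ∑ᵥ dᵥ g(v)²)^{1/2}`.
-/

section Sums

variable {α R : Type*} [CommRing R]

theorem sum_sum_sub_sq (s : Finset α) (f : α → R) :
    ∑ u ∈ s, ∑ v ∈ s, (f u - f v) ^ 2 = 2 * s.card * ∑ v ∈ s, f v ^ 2 - 2 * (∑ v ∈ s, f v) ^ 2 := by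
  simp only [sub_sq, sum_add_distrib, sum_sub_distrib, sum_const, nsmul_eq_mul, mul_assoc,
    ← mul_sum, ← sum_mul]
  ring

theorem sum_sum_ite_eq_zero_add [DecidableEq α] (s : Finset α) (a : α → R) :
    ∑ u ∈ s, ∑ v ∈ s, (if u = v then 0 else a u + a v) = 2 * (s.card - 1) * ∑ v ∈ s, a v := by
  have (u v : α) : (if u = v then 0 else a u + a v) = a u + a v - if u = v then 2 * a u else 0 := by
    split_ifs with h
    · rw [h]; ring
    · ring
  simp only [this, sum_sub_distrib, sum_ite_eq, sum_add_distrib, sum_const, nsmul_eq_mul,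
    ← mul_sum, sum_ite_mem, inter_self]
  ring

theorem sum_sum_abs_indicator_sub [DecidableEq α] (s S : Finset α) :
    ∑ u ∈ s, ∑ v ∈ s, |(if u ∈ S then 1 else 0) - (if v ∈ S then 1 else 0 : ℝ)| =
      2 * ((s ∩ S).card * (s \ S).card) := by
  have inner (u : α) : ∑ v ∈ s, |(if u ∈ S then 1 else 0) - (if v ∈ S then 1 else 0 : ℝ)| =
      if u ∈ S then ((s \ S).card : ℝ) else (s ∩ S).card := by
    by_cases hu : u ∈ S <;> simp [hu, apply_ite, sum_ite, filter_mem_eq_inter, filter_not]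
  simp only [inner, sum_ite, filter_mem_eq_inter, sum_const, nsmul_eq_mul, filter_not,
    sdiff_inter_self_left]
  ring

theorem exists_weighted_median [Fintype α] [Nonempty α] (μ : α → ℕ) (f : α → ℝ) :
    ∃ c, 2 * ∑ i with c < f i, μ i ≤ ∑ i, μ i ∧ 2 * ∑ i with f i < c, μ i ≤ ∑ i, μ i := by
  classical
  set A := (univ.image f).filter fun x => ∑ i, μ i ≤ 2 * ∑ i with f i ≤ x, μ i
  have hA : A.Nonempty := by
    obtain ⟨i₀, -, hi₀⟩ := univ.exists_max_image f univ_nonempty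
    refine ⟨f i₀, mem_filter.2 ⟨mem_image_of_mem _ (mem_univ _), ?_⟩⟩
    rw [filter_true_of_mem fun i _ => hi₀ i (mem_univ i)]
    omega
  have hcA := mem_filter.1 (A.min'_mem hA)
  refine ⟨A.min' hA, ?_, ?_⟩
  · have := sum_filter_add_sum_filter_not univ (fun i => f i ≤ A.min' hA) μ
    simp only [not_le] at this
    omega
  · rcases (univ.filter fun i => f i < A.min' hA).eq_empty_or_nonempty with hB | hB
    · rw [hB, sum_empty]
      omega
    obtain ⟨i₁, hi₁, hmax⟩ := exists_max_image _ f hB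
    have hi₁A : f i₁ ∉ A := fun h => (mem_filter.1 hi₁).2.not_ge (A.min'_le _ h)
    have hsub : (univ.filter fun i => f i < A.min' hA) ⊆ univ.filter fun i => f i ≤ f i₁ :=
      fun i hi => mem_filter.2 ⟨mem_univ i, hmax i hi⟩
    have := sum_le_sum_of_subset (f := μ) hsub
    simp only [A, mem_filter, mem_image_of_mem f (mem_univ i₁), true_and, not_le] at hi₁A
    omega

theorem sq_sub_eq_sq_max_add_sq_max (a c : ℝ) :
    (a - c) ^ 2 = max (a - c) 0 ^ 2 + max (c - a) 0 ^ 2 := by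
  rcases le_total a c with h | h
  · rw [max_eq_right (by linarith), max_eq_left (by linarith)]; ring
  · rw [max_eq_left (by linarith), max_eq_right (by linarith)]; ring

theorem sq_max_sub_add_sq_max_sub_le (a b c : ℝ) :
    (max (a - c) 0 - max (b - c) 0) ^ 2 + (max (c - a) 0 - max (c - b) 0) ^ 2 ≤ (a - b) ^ 2 := by
  rcases le_total a c with ha | ha <;> rcases le_total b c with hb | hb <;>
    simp only [max_eq_left, max_eq_right, sub_nonneg, sub_nonpos, ha, hb] <;> nlinarith

end Sums

namespace HypergraphCheeger

section DecidableEq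

variable {V : Type*} [DecidableEq V]

def edgeWeight (E : Multiset (Finset V)) (u v : V) : ℝ := if u = v then 0 else Evw E u v

theorem edgeWeight_nonneg (E : Multiset (Finset V)) (u v : V) : 0 ≤ edgeWeight E u v := by
  unfold edgeWeight; split_ifs <;> positivity

def cutSize (E : Multiset (Finset V)) (S : Finset V) : ℕ :=
  (E.map fun e => (e ∩ S).card * (e \ S).card).sum

theorem sum_Er_eq_cutSize {E : Multiset (Finset V)} {k : ℕ} (hk : ∀ e ∈ E, e.card = k)
    (S : Finset V) :
    ∑ r ∈ Icc 1 (k - 1), Multiset.card (Er E S r) * r * (k - r) = cutSize E S := by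
  induction E using Multiset.induction_on with
  | empty => simp [Er, cutSize]
  | cons e E ih =>
    have hcard := card_sdiff_add_card_inter e S
    rw [hk e (Multiset.mem_cons_self e E)] at hcard
    have hedge : ∑ r ∈ Icc 1 (k - 1), (if (e ∩ S).card = r then 1 else 0) * r * (k - r) =
        (e ∩ S).card * (e \ S).card := by
      simp only [ite_mul, one_mul, zero_mul, sum_ite_eq, mem_Icc]
      split_ifs
      · rw [← hcard]; congr 1; omega
      · rcases (by omega : (e ∩ S).card = 0 ∨ (e \ S).card = 0) with h | h <;> simp [h]
    simp only [Er, Multiset.filter_cons, Multiset.card_add, cutSize, Multiset.map_cons,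
      Multiset.sum_cons] at ih ⊢
    rw [← hedge, ← ih fun e' he' => hk e' (Multiset.mem_cons_of_mem he'), ← sum_add_distrib]
    refine sum_congr rfl fun r _ => ?_
    split_ifs <;> simp [add_mul]

theorem one_le_of_hdeg_pos {E : Multiset (Finset V)} {k : ℕ} (hk : ∀ e ∈ E, e.card = k) {v : V}
    (hv : 0 < hdeg E v) : 1 ≤ k := by
  obtain ⟨e, he, hve⟩ := Multiset.countP_pos.1 hv
  exact hk e he ▸ card_pos.2 ⟨v, hve⟩

end DecidableEq

variable {V : Type*} [Fintype V] [DecidableEq V]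

def degNormSq (E : Multiset (Finset V)) (f : V → ℝ) : ℝ := ∑ v, (hdeg E v : ℝ) * f v ^ 2

def energy (E : Multiset (Finset V)) (f : V → ℝ) : ℝ :=
  ∑ u, ∑ v, edgeWeight E u v * (f u - f v) ^ 2

def variation (E : Multiset (Finset V)) (f : V → ℝ) : ℝ :=
  ∑ u, ∑ v, edgeWeight E u v * |f u - f v|

theorem degNormSq_nonneg (E : Multiset (Finset V)) (f : V → ℝ) : 0 ≤ degNormSq E f :=
  sum_nonneg fun v _ => by positivity

theorem degNormSq_pos {E : Multiset (Finset V)} (hdegpos : ∀ v, 0 < hdeg E v) {f : V → ℝ}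
    (hf : f ≠ 0) : 0 < degNormSq E f := by
  obtain ⟨v, hv⟩ := Function.ne_iff.1 hf
  exact sum_pos' (fun w _ => by positivity)
    ⟨v, mem_univ v, mul_pos (by exact_mod_cast hdegpos v) (sq_pos_of_ne_zero hv)⟩

theorem energy_nonneg (E : Multiset (Finset V)) (f : V → ℝ) : 0 ≤ energy E f :=
  sum_nonneg fun u _ => sum_nonneg fun v _ => mul_nonneg (edgeWeight_nonneg E u v) (sq_nonneg _)

theorem sum_edges_sum_eq_sum_hdeg_mul (E : Multiset (Finset V)) (g : V → ℝ) :
    (E.map fun e => ∑ v ∈ e, g v).sum = ∑ v, hdeg E v * g v := by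
  induction E using Multiset.induction_on with
  | empty => simp [hdeg]
  | cons e E ih =>
    simp [ih, hdeg, Multiset.countP_cons, add_mul, sum_add_distrib, sum_ite_mem, add_comm]

theorem sum_edges_sum_sum_eq_sum_edgeWeight_mul (E : Multiset (Finset V)) (F : V → V → ℝ)
    (hF : ∀ u, F u u = 0) :
    (E.map fun e => ∑ u ∈ e, ∑ v ∈ e, F u v).sum = ∑ u, ∑ v, edgeWeight E u v * F u v := by
  induction E using Multiset.induction_on with
  | empty => simp [edgeWeight, Evw]
  | cons e E ih =>
    have hcons (u v : V) : edgeWeight (e ::ₘ E) u v * F u v =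
        (if u ∈ e ∧ v ∈ e then F u v else 0) + edgeWeight E u v * F u v := by
      rcases eq_or_ne u v with rfl | huv
      · simp [edgeWeight, hF]
      · simp only [edgeWeight, Evw, if_neg huv, Multiset.countP_cons]
        split_ifs <;> push_cast <;> ring
    simp [ih, hcons, sum_add_distrib, ite_and, sum_ite_mem]

theorem two_mul_sum_edges_sq {E : Multiset (Finset V)} {k : ℕ} (hk : ∀ e ∈ E, e.card = k)
    (f : V → ℝ) :
    2 * (E.map fun e => (∑ v ∈ e, f v) ^ 2).sum = 2 * k * degNormSq E f - energy E f := by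
  have hsq : (E.map fun e => ∑ u ∈ e, ∑ v ∈ e, (f u - f v) ^ 2).sum = energy E f :=
    sum_edges_sum_sum_eq_sum_edgeWeight_mul E _ (by simp)
  rw [Multiset.map_congr rfl (fun e he => by rw [sum_sum_sub_sq, hk e he]), Multiset.sum_map_sub,
    Multiset.sum_map_mul_left, Multiset.sum_map_mul_left, sum_edges_sum_eq_sum_hdeg_mul] at hsq
  rw [degNormSq, ← hsq]
  ring

theorem sum_sum_edgeWeight_mul_add_sq_le {E : Multiset (Finset V)} {k : ℕ}
    (hk : ∀ e ∈ E, e.card = k) (g : V → ℝ) :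
    ∑ u, ∑ v, edgeWeight E u v * (g u + g v) ^ 2 ≤ 4 * (k - 1) * degNormSq E g := by
  have hsum : ∑ u, ∑ v, edgeWeight E u v * (if u = v then 0 else g u ^ 2 + g v ^ 2) =
      2 * (k - 1) * degNormSq E g := by
    rw [← sum_edges_sum_sum_eq_sum_edgeWeight_mul E _ (by simp),
      Multiset.map_congr rfl (fun e he => by rw [sum_sum_ite_eq_zero_add, hk e he]),
      Multiset.sum_map_mul_left, sum_edges_sum_eq_sum_hdeg_mul, degNormSq]
  calc ∑ u, ∑ v, edgeWeight E u v * (g u + g v) ^ 2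
      ≤ ∑ u, ∑ v, 2 * (edgeWeight E u v * (if u = v then 0 else g u ^ 2 + g v ^ 2)) := by
        refine sum_le_sum fun u _ => sum_le_sum fun v _ => ?_
        by_cases huv : u = v
        · simp [huv, edgeWeight]
        · rw [if_neg huv, ← mul_assoc, mul_comm 2, mul_assoc]
          exact mul_le_mul_of_nonneg_left (by nlinarith [sq_nonneg (g u - g v)])
            (edgeWeight_nonneg E u v)
    _ = 4 * (k - 1) * degNormSq E g := by
        rw [← sum_congr rfl fun u _ => mul_sum .., ← mul_sum, hsum]
        ring

theorem variation_indicator (E : Multiset (Finset V)) (S : Finset V) :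
    variation E (fun v => if v ∈ S then 1 else 0) = 2 * cutSize E S := by
  rw [variation, ← sum_edges_sum_sum_eq_sum_edgeWeight_mul E _ (by simp), cutSize,
    Multiset.map_congr rfl (fun e _ => sum_sum_abs_indicator_sub e S)]
  simp [Multiset.sum_map_mul_left, Nat.cast_multiset_sum, Multiset.map_map]

theorem variation_eq_layer (E : Multiset (Finset V)) {t : V → ℝ} {S : Finset V} {m : ℝ}
    (hm : 0 ≤ m) (hS : ∀ v ∈ S, m ≤ t v) (hSc : ∀ v ∉ S, t v = 0) :
    variation E t = m * variation E (fun v => if v ∈ S then 1 else 0) +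
      variation E (fun v => t v - if v ∈ S then m else 0) := by
  simp only [variation, mul_sum, ← sum_add_distrib]
  refine sum_congr rfl fun u _ => sum_congr rfl fun v _ => ?_
  rw [mul_left_comm, ← mul_add]
  congr 1
  by_cases hu : u ∈ S <;> by_cases hv : v ∈ S
  · simp [hu, hv]
  · have := hS u hu
    simp [hu, hv, hSc v hv, abs_of_nonneg (hm.trans this), abs_of_nonneg (sub_nonneg.2 this)]
  · have := hS v hv
    simp [hu, hv, hSc u hu, abs_of_nonneg (hm.trans this), abs_of_nonpos (sub_nonpos.2 this)]
  · simp [hu, hv, hSc u hu, hSc v hv]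

theorem sq_variation_sq_le_energy_mul (E : Multiset (Finset V)) {g : V → ℝ} (hg : ∀ v, 0 ≤ g v) :
    variation E (fun v => g v ^ 2) ^ 2 ≤
      energy E g * ∑ u, ∑ v, edgeWeight E u v * (g u + g v) ^ 2 := by
  have hfactor (u v : V) : |g u ^ 2 - g v ^ 2| = |g u - g v| * (g u + g v) := by
    rw [sq_sub_sq, abs_mul, abs_of_nonneg (add_nonneg (hg u) (hg v)), mul_comm]
  simp only [variation, energy, hfactor, ← Fintype.sum_prod_type']
  refine sum_sq_le_sum_mul_sum_of_sq_le_mul _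
    (fun p _ => mul_nonneg (edgeWeight_nonneg E _ _) (sq_nonneg _))
    (fun p _ => mul_nonneg (edgeWeight_nonneg E _ _) (sq_nonneg _)) (fun p _ => le_of_eq ?_)
  rw [← sq_abs (g p.1 - g p.2)]
  ring

theorem energy_max_sub_add_energy_max_sub_le (E : Multiset (Finset V)) (f : V → ℝ) (c : ℝ) :
    energy E (fun v => max (f v - c) 0) + energy E (fun v => max (c - f v) 0) ≤ energy E f := by
  simp only [energy, ← sum_add_distrib, ← mul_add]
  gcongr with u _ v _
  · exact edgeWeight_nonneg E u v
  · exact sq_max_sub_add_sq_max_sub_le _ _ _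

theorem degNormSq_le_of_orthogonal {E : Multiset (Finset V)} {f : V → ℝ}
    (horth : ∑ v, (hdeg E v : ℝ) * f v = 0) (c : ℝ) :
    degNormSq E f ≤
      degNormSq E (fun v => max (f v - c) 0) + degNormSq E (fun v => max (c - f v) 0) := by
  have hterm (v : V) : (hdeg E v : ℝ) * (f v - c) ^ 2 =
      hdeg E v * f v ^ 2 - 2 * c * (hdeg E v * f v) + c ^ 2 * hdeg E v := by ring
  have hshift : degNormSq E (fun v => f v - c) = degNormSq E f + c ^ 2 * ∑ v, (hdeg E v : ℝ) := by
    simp only [degNormSq, hterm, sum_add_distrib, sum_sub_distrib, ← mul_sum, horth]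
    ring
  have hsplit : degNormSq E (fun v => f v - c) =
      degNormSq E (fun v => max (f v - c) 0) + degNormSq E (fun v => max (c - f v) 0) := by
    simp only [degNormSq, ← sum_add_distrib, ← mul_add, ← sq_sub_eq_sq_max_add_sq_max]
  have hvol : 0 ≤ c ^ 2 * ∑ v, (hdeg E v : ℝ) := by positivity
  linarith

theorem cheeger_nonneg (E : Multiset (Finset V)) (k : ℕ) : 0 ≤ cheeger E k :=
  Real.sInf_nonneg (by rintro x ⟨S, -, -, rfl⟩; positivity)

theorem cheeger_mul_le_cutSize {E : Multiset (Finset V)} {k : ℕ} (hk : ∀ e ∈ E, e.card = k)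
    {S : Finset V} (hS : S.Nonempty) (hSu : S ≠ univ) :
    cheeger E k * (min (hvol E S) (hvol E Sᶜ) : ℕ) ≤ cutSize E S := by
  have hle : cheeger E k ≤ (cutSize E S : ℝ) / (min (hvol E S) (hvol E Sᶜ) : ℕ) := by
    refine csInf_le ⟨0, ?_⟩ ⟨S, hS, hSu, by rw [sum_Er_eq_cutSize hk]⟩
    rintro x ⟨S, -, -, rfl⟩
    positivity
  rcases Nat.eq_zero_or_pos (min (hvol E S) (hvol E Sᶜ)) with h0 | hpos
  · simp [h0]
  · exact (le_div_iff₀ (by exact_mod_cast hpos)).1 hle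

theorem cheeger_mul_hvol_le_cutSize {E : Multiset (Finset V)} {k : ℕ} (hk : ∀ e ∈ E, e.card = k)
    (hdegpos : ∀ v, 0 < hdeg E v) {S : Finset V} (hS : S.Nonempty)
    (hsmall : 2 * hvol E S ≤ hvol E univ) :
    cheeger E k * hvol E S ≤ cutSize E S := by
  have hsplit : hvol E S + hvol E Sᶜ = hvol E univ := sum_add_sum_compl S _
  have hpos : 0 < hvol E S := sum_pos (fun v _ => hdegpos v) hS
  have hSu : S ≠ univ := by rintro rfl; omega
  have := cheeger_mul_le_cutSize hk hS hSu
  rwa [min_eq_left (by omega)] at this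

theorem cheeger_eq_zero_of_subsingleton [Subsingleton V] (E : Multiset (Finset V)) (k : ℕ) :
    cheeger E k = 0 := by
  rw [cheeger]
  convert Real.sInf_empty
  refine Set.eq_empty_of_forall_notMem ?_
  rintro x ⟨S, ⟨v, hv⟩, hSu, -⟩
  exact hSu (eq_univ_of_forall fun w => Subsingleton.elim v w ▸ hv)

theorem two_mul_cheeger_mul_le_variation {E : Multiset (Finset V)} {k : ℕ}
    (hk : ∀ e ∈ E, e.card = k) (hdegpos : ∀ v, 0 < hdeg E v) {t : V → ℝ} (ht : ∀ v, 0 ≤ t v)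
    (hsmall : 2 * hvol E {v | t v ≠ 0} ≤ hvol E univ) :
    2 * cheeger E k * ∑ v, (hdeg E v : ℝ) * t v ≤ variation E t := by
  generalize hS : ({v | t v ≠ 0} : Finset V) = S at hsmall
  induction S using strongInduction generalizing t with
  | H S ih =>
    have hSc : ∀ v ∉ S, t v = 0 := fun v hv => by simpa [← hS] using hv
    rcases S.eq_empty_or_nonempty with rfl | hSne
    · have : t = 0 := funext fun v => hSc v (notMem_empty v)
      simp [this, variation]
    -- Peel off the bottom layer `t v₀ • 1_S` of `t` and recurse on the smaller support.
    obtain ⟨v₀, hv₀, hmin⟩ := S.exists_min_image t hSne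
    set t' : V → ℝ := fun v => t v - if v ∈ S then t v₀ else 0
    have ht' : ∀ v, 0 ≤ t' v := fun v => by
      by_cases hv : v ∈ S <;> simp [t', hv, hmin, ht]
    have hsub : ({v | t' v ≠ 0} : Finset V) ⊂ S := by
      refine ssubset_iff_of_subset ?_ |>.2 ⟨v₀, hv₀, by simp [t', hv₀]⟩
      intro v hv
      by_contra hvS
      simp [t', hvS, hSc v hvS] at hv
    have hvol_le : hvol E {v | t' v ≠ 0} ≤ hvol E S := sum_le_sum_of_subset hsub.subset
    have hsum : ∑ v, (hdeg E v : ℝ) * t v = t v₀ * hvol E S + ∑ v, (hdeg E v : ℝ) * t' v := by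
      simp [t', hvol, mul_sub, sum_sub_distrib, mul_sum, mul_comm]
    have hcut := cheeger_mul_hvol_le_cutSize hk hdegpos hSne hsmall
    have hrest := ih _ hsub ht' rfl (by omega)
    rw [variation_eq_layer E (ht v₀) hmin hSc, variation_indicator, hsum]
    nlinarith [ht v₀]

theorem sq_cheeger_mul_le_energy {E : Multiset (Finset V)} {k : ℕ} (hk : ∀ e ∈ E, e.card = k)
    (hk1 : 1 ≤ k) (hdegpos : ∀ v, 0 < hdeg E v) {g : V → ℝ} (hg : ∀ v, 0 ≤ g v)
    (hsmall : 2 * hvol E {v | g v ≠ 0} ≤ hvol E univ) :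
    cheeger E k ^ 2 * degNormSq E g ≤ (k - 1) * energy E g := by
  have hvar : 2 * cheeger E k * degNormSq E g ≤ variation E (fun v => g v ^ 2) := by
    simpa [degNormSq] using two_mul_cheeger_mul_le_variation hk hdegpos
      (t := fun v => g v ^ 2) (fun v => sq_nonneg _) (by simpa using hsmall)
  have hcs := sq_variation_sq_le_energy_mul E hg
  have hq := sum_sum_edgeWeight_mul_add_sq_le hk g
  have hh := cheeger_nonneg E k
  have hD := degNormSq_nonneg E g
  have hN := energy_nonneg E g
  have hk1' : (1 : ℝ) ≤ k := by exact_mod_cast hk1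
  have key : degNormSq E g * (cheeger E k ^ 2 * degNormSq E g) ≤
      degNormSq E g * ((k - 1) * energy E g) := by
    have h2 : (2 * cheeger E k * degNormSq E g) ^ 2 ≤ variation E (fun v => g v ^ 2) ^ 2 :=
      pow_le_pow_left₀ (by positivity) hvar 2
    nlinarith [mul_le_mul_of_nonneg_left hq hN]
  rcases hD.eq_or_lt with h0 | hpos
  · rw [← h0, mul_zero]
    exact mul_nonneg (by linarith) hN
  · exact le_of_mul_le_mul_left key hpos

theorem sq_cheeger_mul_le_energy_of_orthogonal [Nonempty V] {E : Multiset (Finset V)} {k : ℕ}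
    (hk : ∀ e ∈ E, e.card = k) (hk1 : 1 ≤ k) (hdegpos : ∀ v, 0 < hdeg E v) {f : V → ℝ}
    (horth : ∑ v, (hdeg E v : ℝ) * f v = 0) :
    cheeger E k ^ 2 * degNormSq E f ≤ (k - 1) * energy E f := by
  obtain ⟨c, hup, hlow⟩ := exists_weighted_median (hdeg E) f
  have hpos := sq_cheeger_mul_le_energy hk hk1 hdegpos (g := fun v => max (f v - c) 0)
    (fun _ => le_max_right _ _) (by simpa [hvol] using hup)
  have hneg := sq_cheeger_mul_le_energy hk hk1 hdegpos (g := fun v => max (c - f v) 0)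
    (fun _ => le_max_right _ _) (by simpa [hvol] using hlow)
  have hD := degNormSq_le_of_orthogonal horth c
  have hN := energy_max_sub_add_energy_max_sub_le E f c
  have hk1' : (0 : ℝ) ≤ k - 1 := by
    have : (1 : ℝ) ≤ k := by exact_mod_cast hk1
    linarith
  nlinarith [mul_le_mul_of_nonneg_left hD (sq_nonneg (cheeger E k)),
    mul_le_mul_of_nonneg_left hN hk1']

theorem RQ_eq_div (E : Multiset (Finset V)) (f : V → ℝ) :
    RQ E f = (E.map fun e => (∑ v ∈ e, f v) ^ 2).sum / degNormSq E f := rfl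

theorem RQ_le {E : Multiset (Finset V)} {k : ℕ} (hk : ∀ e ∈ E, e.card = k) (f : V → ℝ) :
    RQ E f ≤ k :=
  RQ_eq_div E f ▸ div_le_of_le_mul₀ (degNormSq_nonneg E f) k.cast_nonneg
    (by linarith [two_mul_sum_edges_sq hk f, energy_nonneg E f])

theorem RQ_le_of_orthogonal [Nonempty V] {E : Multiset (Finset V)} {k : ℕ}
    (hk : ∀ e ∈ E, e.card = k) (hk1 : 1 ≤ k) (hdegpos : ∀ v, 0 < hdeg E v) {f : V → ℝ}
    (hf : f ≠ 0) (horth : ∑ v, (hdeg E v : ℝ) * f v = 0) :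
    RQ E f ≤ k - cheeger E k ^ 2 / (2 * (k - 1)) := by
  have hD := degNormSq_pos hdegpos hf
  have hk1' : (1 : ℝ) ≤ k := by exact_mod_cast hk1
  have hbound : cheeger E k ^ 2 * degNormSq E f / (2 * (k - 1)) ≤ energy E f / 2 :=
    div_le_of_le_mul₀ (by linarith) (by linarith [energy_nonneg E f])
      (by linarith [sq_cheeger_mul_le_energy_of_orthogonal hk hk1 hdegpos horth])
  rw [RQ_eq_div, div_le_iff₀ hD, sub_mul, div_mul_eq_mul_div]
  linarith [two_mul_sum_edges_sq hk f]

theorem lamSecond_le {E : Multiset (Finset V)} {k : ℕ} (hk : ∀ e ∈ E, e.card = k) :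
    lamSecond E ≤ k :=
  Real.sSup_le (by rintro x ⟨f, -, -, rfl⟩; exact RQ_le hk f) k.cast_nonneg

theorem exists_ne_zero_orthogonal [Nontrivial V] {E : Multiset (Finset V)}
    (hdegpos : ∀ v, 0 < hdeg E v) : ∃ f : V → ℝ, f ≠ 0 ∧ ∑ v, (hdeg E v : ℝ) * f v = 0 := by
  obtain ⟨v₁, v₂, hne⟩ := exists_pair_ne V
  refine ⟨Pi.single v₁ (hdeg E v₂ : ℝ) - Pi.single v₂ (hdeg E v₁ : ℝ), fun h => ?_, ?_⟩
  · have : (hdeg E v₂ : ℝ) = 0 := by simpa [hne] using congrFun h v₁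
    exact (hdegpos v₂).ne' (mod_cast this)
  · simp [mul_sub, sum_sub_distrib, Pi.single_apply, mul_comm]

end HypergraphCheeger

open HypergraphCheeger

theorem stmt7_general {V : Type*} [Fintype V] [DecidableEq V]
    (E : Multiset (Finset V)) (k : ℕ)
    (hk : ∀ e ∈ E, e.card = k) (hdegpos : ∀ v, 0 < hdeg E v) :
    (k : ℝ) - lamSecond E ≥ cheeger E k ^ 2 / (2 * ((k : ℝ) - 1)) := by
  rcases subsingleton_or_nontrivial V with hV | hV
  · rw [cheeger_eq_zero_of_subsingleton, sq, zero_mul, zero_div]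
    linarith [lamSecond_le hk]
  · obtain ⟨v⟩ := (inferInstance : Nonempty V)
    have hk1 := one_le_of_hdeg_pos hk (hdegpos v)
    obtain ⟨f₀, hf₀, horth₀⟩ := exists_ne_zero_orthogonal hdegpos
    have : lamSecond E ≤ k - cheeger E k ^ 2 / (2 * (k - 1)) := by
      refine csSup_le ⟨RQ E f₀, f₀, hf₀, horth₀, rfl⟩ ?_
      rintro x ⟨f, hf, horth, rfl⟩
      exact RQ_le_of_orthogonal hk hk1 hdegpos hf horth
    linarith

theorem stmt7 {V : Type*} [Fintype V] [DecidableEq V] [Nonempty V]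
    (E : Multiset (Finset V)) (k : ℕ)
    (hk : ∀ e ∈ E, e.card = k) (hconn : HConnected E) (hdegpos : ∀ v, 0 < hdeg E v)
    (hass : ∀ v : V, hdeg E v ≤ ∑ w ∈ Finset.univ.erase v, hdeg E w) :
    (k : ℝ) - lamSecond E ≥ cheeger E k ^ 2 / (2 * ((k : ℝ) - 1)) :=
  stmt7_general E k hk hdegpos
end

section
/- For a k-uniform hypergraph, the multiplicity of the eigenvalue k of the normalized Laplacian L equals the number of connected components of the hypergraph. -/
open Finset

/-!
For `|e| = k`, the equation `L f = k f` at a vertex `v` of positive degree reads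
`∑_{e ∋ v} ∑_{w ∈ e} (f v - f w) = 0`. At a maximiser of `f` every summand is nonnegative, hence
zero, so the maximum propagates to all neighbours: a maximum principle forcing `f` to be constant
on connected components. Conversely such functions are eigenfunctions, so the eigenspace is the
space of functions on the set of components.
-/

open Matrix

theorem Multiset.sum_countP_mem_mul {V : Type*} [Fintype V] [DecidableEq V]
    (F : Multiset (Finset V)) (f : V → ℝ) :
    ∑ w, (F.countP (w ∈ ·) : ℝ) * f w = (F.map fun e => ∑ w ∈ e, f w).sum := by
  induction F using Multiset.induction with
  | empty => simp
  | cons e F ih =>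
    simp only [Multiset.countP_cons, Multiset.map_cons, Multiset.sum_cons, Nat.cast_add,
      Nat.cast_ite, Nat.cast_one, Nat.cast_zero, add_mul, Finset.sum_add_distrib, ih,
      ite_mul, one_mul, zero_mul, Finset.sum_ite_mem, Finset.univ_inter]
    ring

theorem apply_eq_of_rel_of_forall_localMax {V : Type*} [Finite V] {r : V → V → Prop}
    [Std.Symm r] {f : V → ℝ}
    (hmax : ∀ x, (∀ w, r x w → f w ≤ f x) → ∀ y, r x y → f y = f x)
    {a b : V} (hab : r a b) : f a = f b := by
  classical
  have : Fintype V := Fintype.ofFinite V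
  have := Relation.ReflTransGen.stdSymm (r := r)
  -- the maximum of `f` over the component of `a` spreads along every path from a maximiser
  obtain ⟨v, hv, hv_max⟩ := Finset.exists_max_image
    {w | Relation.ReflTransGen r a w} f ⟨a, by simp [Relation.ReflTransGen.refl]⟩
  simp only [Finset.mem_filter, Finset.mem_univ, true_and] at hv hv_max
  have h_const : ∀ x, Relation.ReflTransGen r v x → f x = f v := by
    intro x hx
    induction hx with
    | refl => rfl
    | @tail c y hvc hcy ih =>
      rw [← ih]
      refine hmax c (fun w hcw => ?_) y hcy
      rw [ih]
      exact hv_max w ((hv.trans hvc).tail hcw)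
  rw [h_const a (symm hv), h_const b ((symm hv).tail hab)]

theorem LinearMap.mem_range_funLeft_quot_mk_iff {R M V : Type*} [Semiring R] [AddCommMonoid M]
    [Module R M] {r : V → V → Prop} {f : V → M} :
    f ∈ range (funLeft R M (Quot.mk r)) ↔ ∀ a b, r a b → f a = f b := by
  constructor
  · rintro ⟨g, rfl⟩ a b hab
    exact congrArg g (Quot.sound hab)
  · exact fun hf => ⟨Quot.lift f hf, rfl⟩

theorem LinearMap.finrank_range_funLeft_quot_mk {K V : Type*} [Field K] [Finite V]
    (r : V → V → Prop) :
    Module.finrank K (range (funLeft K K (Quot.mk r))) = Nat.card (Quot r) := by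
  have : Fintype (Quot r) := Fintype.ofFinite _
  rw [finrank_range_of_inj (funLeft_injective_of_surjective K K _ Quot.mk_surjective),
    Module.finrank_fintype_fun_eq_card, Nat.card_eq_fintype_card]

def HAdj {V : Type*} (E : Multiset (Finset V)) (a b : V) : Prop := ∃ e ∈ E, a ∈ e ∧ b ∈ e

instance {V : Type*} (E : Multiset (Finset V)) : Std.Symm (HAdj E) :=
  ⟨fun _ _ ⟨e, he, ha, hb⟩ => ⟨e, he, hb, ha⟩⟩

section Hypergraph

variable {V : Type*} [DecidableEq V] (E : Multiset (Finset V))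

def edgeDeviation (f : V → ℝ) (v : V) : ℝ :=
  ((E.filter (v ∈ ·)).map fun e => ∑ w ∈ e, (f v - f w)).sum

theorem Evw_self (v : V) : Evw E v v = hdeg E v := by
  simp only [Evw, hdeg, and_self]

theorem Evw_eq_countP_filter (v w : V) : Evw E v w = (E.filter (v ∈ ·)).countP (w ∈ ·) := by
  rw [Evw, Multiset.countP_filter]
  simp only [and_comm]

theorem lapM_apply [Fintype V] {v : V} (hv : hdeg E v ≠ 0) (w : V) :
    lapM E v w = Evw E v w / hdeg E v := by
  have hv' : (hdeg E v : ℝ) ≠ 0 := Nat.cast_ne_zero.mpr hv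
  by_cases hvw : v = w
  · subst hvw
    simp only [lapM, adjM, Matrix.of_apply, if_true, zero_div, sub_zero]
    rw [Evw_self, div_self hv']
  · simp only [lapM, adjM, Matrix.of_apply, hvw, if_false, zero_sub, neg_div, neg_neg]

theorem hdeg_mul_lapM_mulVec [Fintype V] (f : V → ℝ) (v : V) :
    (hdeg E v : ℝ) * (lapM E *ᵥ f) v = ((E.filter (v ∈ ·)).map fun e => ∑ w ∈ e, f w).sum := by
  by_cases hv : hdeg E v = 0
  · have hempty : E.filter (v ∈ ·) = 0 := by
      rwa [← Multiset.card_eq_zero, ← Multiset.countP_eq_card_filter]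
    simp [hv, hempty]
  · have hv' : (hdeg E v : ℝ) ≠ 0 := Nat.cast_ne_zero.mpr hv
    simp only [mulVec, dotProduct, lapM_apply E hv, div_mul_eq_mul_div, ← Finset.sum_div,
      mul_div_cancel₀ _ hv', ← Multiset.sum_countP_mem_mul, Evw_eq_countP_filter]

theorem hdeg_mul_sub_lapM_mulVec [Fintype V] {k : ℕ} (hk : ∀ e ∈ E, e.card = k)
    (f : V → ℝ) (v : V) :
    (hdeg E v : ℝ) * (k * f v - (lapM E *ᵥ f) v) = edgeDeviation E f v := by
  have hcard : ∀ e ∈ E.filter (v ∈ ·), ∑ w ∈ e, (f v - f w) = k * f v - ∑ w ∈ e, f w := by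
    intro e he
    rw [Finset.sum_sub_distrib, Finset.sum_const, hk e (Multiset.mem_of_mem_filter he),
      nsmul_eq_mul]
  rw [mul_sub, hdeg_mul_lapM_mulVec, edgeDeviation, Multiset.map_congr rfl hcard,
    Multiset.sum_map_sub, Multiset.map_const', Multiset.sum_replicate, hdeg,
    Multiset.countP_eq_card_filter, nsmul_eq_mul]

theorem mem_eigenspace_lapM_iff [Fintype V] {k : ℕ} (hk : ∀ e ∈ E, e.card = k)
    (hdegpos : ∀ v, 0 < hdeg E v) (f : V → ℝ) :
    f ∈ Module.End.eigenspace (lapM E).mulVecLin (k : ℝ) ↔ ∀ v, edgeDeviation E f v = 0 := by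
  simp only [Module.End.mem_eigenspace_iff, funext_iff, Matrix.mulVecLin_apply, Pi.smul_apply,
    smul_eq_mul, ← hdeg_mul_sub_lapM_mulVec E hk, mul_eq_zero, sub_eq_zero,
    Nat.cast_eq_zero, (hdegpos _).ne', false_or, eq_comm (a := (k : ℝ) * _)]

theorem edgeDeviation_eq_zero_of_hAdj {f : V → ℝ} (hf : ∀ a b, HAdj E a b → f a = f b) (v : V) :
    edgeDeviation E f v = 0 := by
  refine Multiset.sum_eq_zero fun t ht => ?_
  obtain ⟨e, he, rfl⟩ := Multiset.mem_map.mp ht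
  obtain ⟨he, hv⟩ := Multiset.mem_filter.mp he
  exact Finset.sum_eq_zero fun w hw => sub_eq_zero.mpr (hf v w ⟨e, he, hv, hw⟩)

theorem apply_eq_of_edgeDeviation_eq_zero {f : V → ℝ} {x : V} (hx : edgeDeviation E f x = 0)
    (hmax : ∀ w, HAdj E x w → f w ≤ f x) {y : V} (hxy : HAdj E x y) : f y = f x := by
  obtain ⟨e, he, hxe, hye⟩ := hxy
  have he' : e ∈ E.filter (x ∈ ·) := Multiset.mem_filter.mpr ⟨he, hxe⟩
  have hterm_nonneg : ∀ e ∈ E.filter (x ∈ ·), ∀ w ∈ e, 0 ≤ f x - f w := fun e he w hw =>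
    sub_nonneg.mpr (hmax w ⟨e, Multiset.mem_of_mem_filter he, (Multiset.mem_filter.mp he).2, hw⟩)
  have hedge_nonneg : ∀ t ∈ (E.filter (x ∈ ·)).map fun e => ∑ w ∈ e, (f x - f w), 0 ≤ t := by
    simp only [Multiset.mem_map, forall_exists_index, and_imp, forall_apply_eq_imp_iff₂]
    exact fun e he => Finset.sum_nonneg (hterm_nonneg e he)
  have hedge : ∑ w ∈ e, (f x - f w) = 0 := Multiset.all_zero_of_le_zero_le_of_sum_eq_zero
    hedge_nonneg hx _ (Multiset.mem_map_of_mem _ he')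
  rw [Finset.sum_eq_zero_iff_of_nonneg (hterm_nonneg e he')] at hedge
  exact (sub_eq_zero.mp (hedge y hye)).symm

theorem eigenspace_lapM_eq_range [Fintype V] {k : ℕ} (hk : ∀ e ∈ E, e.card = k)
    (hdegpos : ∀ v, 0 < hdeg E v) :
    Module.End.eigenspace (lapM E).mulVecLin (k : ℝ) =
      LinearMap.range (LinearMap.funLeft ℝ ℝ (Quot.mk (HAdj E))) := by
  ext f
  rw [mem_eigenspace_lapM_iff E hk hdegpos, LinearMap.mem_range_funLeft_quot_mk_iff]
  refine ⟨fun hf a b hab => ?_, edgeDeviation_eq_zero_of_hAdj E⟩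
  exact apply_eq_of_rel_of_forall_localMax
    (fun x hx_max y hxy => apply_eq_of_edgeDeviation_eq_zero E (hf x) hx_max hxy) hab

end Hypergraph

theorem stmt9 {V : Type*} [Fintype V] [DecidableEq V] (E : Multiset (Finset V)) (k : ℕ)
    (hk : ∀ e ∈ E, e.card = k) (hdegpos : ∀ v, 0 < hdeg E v) :
    Module.finrank ℝ
        ↥(Module.End.eigenspace (Matrix.mulVecLin (lapM E)) (k : ℝ)) =
      Nat.card (Quot (fun a b : V => ∃ e ∈ E, a ∈ e ∧ b ∈ e)) := by
  rw [eigenspace_lapM_eq_range E hk hdegpos]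
  exact LinearMap.finrank_range_funLeft_quot_mk _
end
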